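/- Let a = (a_1,...,a_{2n}) be an even standard continued fraction expansion (each a_i ∈ {-2,0,2}, a_1, a_{2n} ≠ 0, and a_i = 0 implies a_{i-1} = a_{i+1} = ±2). Define the crossing number c(a) = Σ_{i=1}^{2n'} |a'_i| - k, where (a'_1,...,a'_{2n'}) is the sequence after deleting zeros and k is the number of sign changes in (a'_1,...,a'_{2n'}). Then 2n + 1 ≤ c(a) ≤ 4n. -/
import Mathlib


/-- Deleting zeros in a continued fraction expansion: repeatedly replace a consecutive
triple `(x, 0, y)` by the single entry `x + y`. -/
def delZeros : List ℤ → List ℤ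
  | x :: 0 :: y :: rest => delZeros ((x + y) :: rest)
  | x :: rest => x :: delZeros rest
  | [] => []
termination_by l => l.length

/-- The number of sign changes in a sequence of integers. -/
def signChanges : List ℤ → ℕ
  | x :: y :: rest => (if x * y < 0 then 1 else 0) + signChanges (y :: rest)
  | _ => 0

theorem delZeros_nil : delZeros [] = [] := by rw [delZeros.eq_def]

theorem delZeros_single (x : ℤ) : delZeros [x] = [x] := by
  rw [delZeros.eq_def]; simp [delZeros_nil]

theorem delZeros_zero (x y : ℤ) (rest : List ℤ) :
    delZeros (x :: 0 :: y :: rest) = delZeros ((x + y) :: rest) := by rw [delZeros]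

theorem delZeros_ne (x z : ℤ) (rest : List ℤ) (h : z ≠ 0) :
    delZeros (x :: z :: rest) = x :: delZeros (z :: rest) := by
  rw [delZeros.eq_def]
  split
  · rename_i a b r heq; injection heq with h1 h2; injection h2 with h3 _; exact absurd h3 h
  · rename_i a r hno heq; injection heq with h1 h2; subst h1; subst h2; rfl
  · rename_i heq; exact absurd heq (by simp)

theorem signChanges_le : ∀ (rest : List ℤ) (x : ℤ), signChanges (x :: rest) ≤ rest.length := by
  intro rest
  induction rest with
  | nil => intro x; rw [signChanges.eq_def]; simp
  | cons y r ih =>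
    intro x; rw [signChanges]
    have := ih y
    simp only [List.length_cons]
    split <;> omega

theorem sum_natAbs : ∀ a : List ℤ, (∀ x ∈ a, x = -2 ∨ x = 0 ∨ x = 2) →
    (a.map Int.natAbs).sum + 2 * a.count 0 = 2 * a.length := by
  intro a
  induction a with
  | nil => simp
  | cons x t ih =>
    intro hv
    have ht := ih (fun y hy => hv y (by simp [hy]))
    rcases hv x (by simp) with h | h | h <;>
      subst h <;> simp [List.count_cons] at ht ⊢ <;> omega

theorem key : ∀ (N : ℕ) (l : List ℤ), l.length ≤ N →
    (∀ i : ℕ, l[i]? = some 0 → 1 ≤ i ∧ i + 1 < l.length ∧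
      ∃ x y, l[i - 1]? = some x ∧ l[i + 1]? = some y ∧ 0 < x * y) →
    ((delZeros l).map Int.natAbs).sum = (l.map Int.natAbs).sum ∧
    (delZeros l).length + 2 * l.count 0 = l.length ∧
    (l ≠ [] → delZeros l ≠ []) := by
  intro N
  induction N with
  | zero =>
    intro l hl h
    have : l = [] := List.eq_nil_of_length_eq_zero (by omega)
    subst this; simp [delZeros_nil]
  | succ N ih =>
    intro l hl h
    rcases l with _ | ⟨x, _ | ⟨z, rest⟩⟩
    · simp [delZeros_nil]
    · -- [x]
      have hx : x ≠ 0 := by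
        intro hx0
        have := h 0 (by simp [hx0])
        omega
      refine ⟨by simp [delZeros_single], ?_, by simp [delZeros_single]⟩
      simp [delZeros_single, List.count_cons, hx]
    · by_cases hz0 : z = 0
      · subst hz0
        rcases rest with _ | ⟨y, rest'⟩
        · -- [x, 0] : contradiction
          have := h 1 (by simp)
          simp at this
        · -- x :: 0 :: y :: rest'
          have h1 := h 1 (by simp)
          obtain ⟨-, -, x', y', hx', hy', hxy⟩ := h1
          simp at hx' hy'
          subst hx'; subst hy'
          have hs := mul_pos_iff.mp hxy
          have habs : (x + y).natAbs = x.natAbs + y.natAbs := by rcases hs with ⟨a,b⟩|⟨a,b⟩ <;> omega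
          have hxne : x ≠ 0 := by rcases hs with ⟨a,b⟩|⟨a,b⟩ <;> omega
          have hyne : y ≠ 0 := by rcases hs with ⟨a,b⟩|⟨a,b⟩ <;> omega
          have hxyne : x + y ≠ 0 := by rcases hs with ⟨a,b⟩|⟨a,b⟩ <;> omega
          have hnew : ∀ i : ℕ, ((x + y) :: rest')[i]? = some 0 → 1 ≤ i ∧
              i + 1 < ((x + y) :: rest').length ∧
              ∃ a b, ((x + y) :: rest')[i - 1]? = some a ∧
                ((x + y) :: rest')[i + 1]? = some b ∧ 0 < a * b := by
            intro i hi
            match i with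
            | 0 => simp at hi; exact absurd hi hxyne
            | j + 1 =>
              simp only [List.getElem?_cons_succ] at hi
              have hold : (x :: 0 :: y :: rest')[j + 3]? = some 0 := by
                simpa using hi
              obtain ⟨-, hlen2, x'', y'', hx'', hy'', hxy2⟩ := h (j + 3) hold
              simp only [List.length_cons] at hlen2
              refine ⟨by omega, by simp; omega, ?_⟩
              match j with
              | 0 =>
                -- x'' = y (old index 2)
                simp at hx''
                subst hx''
                refine ⟨x + y, y'', by simp, by simpa using hy'', ?_⟩
                have hs2 := mul_pos_iff.mp hxy2
                rcases hs with ⟨a,b⟩|⟨a,b⟩ <;> rcases hs2 with ⟨c,d⟩|⟨c,d⟩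
                · exact mul_pos (by omega) d
                · omega
                · omega
                · exact mul_pos_of_neg_of_neg (by omega) d
              | m + 1 =>
                refine ⟨x'', y'', ?_, ?_, hxy2⟩
                · simpa using hx''
                · simpa using hy''
          have hlen3 : ((x + y) :: rest').length ≤ N := by simp at hl ⊢; omega
          obtain ⟨ihs, ihl, ihne⟩ := ih ((x + y) :: rest') hlen3 hnew
          rw [delZeros_zero]
          refine ⟨?_, ?_, fun _ => ihne (by simp)⟩
          · rw [ihs]; simp [habs]; omega
          · simp only [List.count_cons, List.length_cons] at ihl ⊢
            simp [hxne, hyne, hxyne] at ihl ⊢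
            omega
      · -- z ≠ 0
        have hx : x ≠ 0 := by
          intro hx0
          have := h 0 (by simp [hx0])
          omega
        have hnew : ∀ i : ℕ, (z :: rest)[i]? = some 0 → 1 ≤ i ∧
            i + 1 < (z :: rest).length ∧
            ∃ a b, (z :: rest)[i - 1]? = some a ∧ (z :: rest)[i + 1]? = some b ∧ 0 < a * b := by
          intro i hi
          match i with
          | 0 => simp at hi; exact absurd hi hz0
          | j + 1 =>
            simp only [List.getElem?_cons_succ] at hi
            have hold : (x :: z :: rest)[j + 2]? = some 0 := by simpa using hi
            obtain ⟨-, hlen2, x'', y'', hx'', hy'', hxy2⟩ := h (j + 2) hold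
            simp only [List.length_cons] at hlen2
            refine ⟨by omega, by simp; omega, x'', y'', ?_, ?_, hxy2⟩
            · simpa using hx''
            · simpa using hy''
        have hlen3 : (z :: rest).length ≤ N := by simp at hl ⊢; omega
        obtain ⟨ihs, ihl, ihne⟩ := ih (z :: rest) hlen3 hnew
        rw [delZeros_ne _ _ _ hz0]
        refine ⟨by simp [ihs], ?_, fun _ => by simp⟩
        simp only [List.count_cons, List.length_cons] at ihl ⊢
        simp [hx] at ihl ⊢
        omega

/-- Proposition 4.4: for an even standard continued fraction expansion `a` of length `2n`,
the crossing number `c(a) = Σ|a'ᵢ| - k` (where `a'` is `a` with zeros deleted and `k` is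
the number of sign changes in `a'`) satisfies `2n + 1 ≤ c(a) ≤ 4n`. -/
theorem crossing_number_bounds (n : ℕ) (hn : 1 ≤ n) (a : List ℤ)
    (hlen : a.length = 2 * n)
    (hval : ∀ x ∈ a, x = -2 ∨ x = 0 ∨ x = 2)
    (hz : ∀ i : ℕ, a[i]? = some 0 →
      1 ≤ i ∧ i + 1 < a.length ∧
        ((a[i - 1]? = some 2 ∧ a[i + 1]? = some 2) ∨
          (a[i - 1]? = some (-2) ∧ a[i + 1]? = some (-2)))) :
    2 * n + 1 ≤ ((delZeros a).map Int.natAbs).sum - signChanges (delZeros a) ∧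
      ((delZeros a).map Int.natAbs).sum - signChanges (delZeros a) ≤ 4 * n := by
  have hH : ∀ i : ℕ, a[i]? = some 0 → 1 ≤ i ∧ i + 1 < a.length ∧
      ∃ x y, a[i - 1]? = some x ∧ a[i + 1]? = some y ∧ 0 < x * y := by
    intro i hi
    obtain ⟨h1, h2, h3⟩ := hz i hi
    refine ⟨h1, h2, ?_⟩
    rcases h3 with ⟨ha, hb⟩ | ⟨ha, hb⟩
    · exact ⟨2, 2, ha, hb, by norm_num⟩
    · exact ⟨-2, -2, ha, hb, by norm_num⟩
  obtain ⟨hsum, hlen', hne⟩ := key a.length a le_rfl hH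
  have hane : a ≠ [] := by intro h0; rw [h0] at hlen; simp at hlen; omega
  have hne' := hne hane
  obtain ⟨x, rest, hx⟩ : ∃ x rest, delZeros a = x :: rest := by
    rcases hd : delZeros a with _ | ⟨x, rest⟩
    · exact absurd hd hne'
    · exact ⟨x, rest, rfl⟩
  have hk : signChanges (delZeros a) + 1 ≤ (delZeros a).length := by
    rw [hx]
    have := signChanges_le rest x
    simp only [List.length_cons]
    omega
  have hs2 := sum_natAbs a hval
  omega
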